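/- Let Ω₁, Ω₂ : [0,T] → Sym(n,ℝ) be C¹ solutions of the Riccati differential equations Ω̇ₖ = AΩₖ + ΩₖA^T + Q − ηₖ(t)ΩₖGΩₖ (k = 1,2), where G and Q are symmetric positive semidefinite, η₁, η₂ are continuous nonnegative scalar functions with η₁(t) ≥ η₂(t) for all t, and both solutions remain bounded and positive semidefinite on [0,T]. If Ω₁(0) − Ω₂(0) is negative semidefinite, then Ω₁(t) − Ω₂(t) is negative semidefinite for all t ∈ [0,T]. -/

import Mathlib

/-!
Put `Δ = Ω₂ - Ω₁` and `μ(t) = ε e^{(C+1)t}`. If `Δ + μ` stopped being positive definite, then at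
the first time `s` it fails, some unit `x` minimises `y ↦ yᵀ Δ(s) y` with value `-μ(s)`, so
`Δ(s) x = -μ(s) x`, i.e. `Ω₁ x = Ω₂ x + μ x`. Substituting this into the two Riccati equations
(`Q` cancels) gives
`xᵀ Δ̇ x = -2μ (xᵀ A x - η₂ xᵀ G Ω₂ x) + (η₁ - η₂) (Ω₁x)ᵀ G (Ω₁x) + η₂ μ² xᵀ G x ≥ -C μ`,
where `C/2` bounds the bracket on the compact set `[0,T] × {unit vectors}`. Hence
`t ↦ xᵀ (Δ + μ) x` has derivative `≥ μ > 0` at `s`, although it is positive before `s` and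
vanishes at `s`. Letting `ε → 0` gives `Δ ≥ 0`.
-/

open Matrix Set Filter Topology

variable {ι : Type*}

lemma continuousOn_of_forall_hasDerivAt_apply {D D' : ℝ → Matrix ι ι ℝ} {s : Set ℝ}
    (hderiv : ∀ t ∈ s, ∀ i j, HasDerivAt (fun s => D s i j) (D' t i j) t) : ContinuousOn D s :=
  continuousOn_pi.2 fun i => continuousOn_pi.2 fun j t ht =>
    (hderiv t ht i j).continuousAt.continuousWithinAt

variable [Fintype ι]

lemma Matrix.IsSymm.dotProduct_mulVec_comm {R : Type*} [CommSemiring R] {M : Matrix ι ι R}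
    (hM : M.IsSymm) (x y : ι → R) : x ⬝ᵥ M *ᵥ y = y ⬝ᵥ M *ᵥ x := by
  rw [dotProduct_mulVec, ← mulVec_transpose, hM.eq, dotProduct_comm]

lemma isCompact_setOf_dotProduct_self_eq_one : IsCompact {x : ι → ℝ | x ⬝ᵥ x = 1} := by
  refine Metric.isCompact_of_isClosed_isBounded
    (isClosed_eq (continuous_id.dotProduct continuous_id) continuous_const) ?_
  refine (Metric.isBounded_closedBall (x := (0 : ι → ℝ)) (r := 1)).subset fun x hx => ?_
  rw [mem_closedBall_zero_iff, pi_norm_le_iff_of_nonneg zero_le_one]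
  intro i
  rw [Real.norm_eq_abs, ← sq_le_one_iff_abs_le_one, ← (show x ⬝ᵥ x = 1 from hx), sq]
  exact Finset.single_le_sum (f := fun j => x j * x j) (fun j _ => mul_self_nonneg _)
    (Finset.mem_univ i)

lemma Matrix.dotProduct_mulVec_nonneg_of_forall_dotProduct_self_eq_one {M : Matrix ι ι ℝ}
    (hM : ∀ x, x ⬝ᵥ x = 1 → 0 ≤ x ⬝ᵥ M *ᵥ x) (x : ι → ℝ) : 0 ≤ x ⬝ᵥ M *ᵥ x := by
  rcases eq_or_ne x 0 with rfl | hx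
  · simp
  have hpos : 0 < x ⬝ᵥ x := by
    simpa using dotProduct_self_star_pos_iff.mpr hx
  set r := √(x ⬝ᵥ x)
  have hunit : (r⁻¹ • x) ⬝ᵥ (r⁻¹ • x) = 1 := by
    rw [smul_dotProduct, dotProduct_smul, smul_smul, smul_eq_mul, ← sq, inv_pow,
      Real.sq_sqrt hpos.le, inv_mul_cancel₀ hpos.ne']
  have := hM _ hunit
  rw [mulVec_smul, smul_dotProduct, dotProduct_smul, smul_smul, smul_eq_mul] at this
  exact nonneg_of_mul_nonneg_right this (by positivity)

lemma HasDerivAt.nonpos_of_forall_Ico_le {g : ℝ → ℝ} {g' a s : ℝ} (hg : HasDerivAt g g' s)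
    (has : a < s) (hmin : ∀ t ∈ Ico a s, g s ≤ g t) : g' ≤ 0 := by
  have hslope : Tendsto (slope g s) (𝓝[<] s) (𝓝 g') :=
    (hasDerivAt_iff_tendsto_slope.mp hg).mono_left (nhdsWithin_mono _ fun t ht => ne_of_lt ht)
  refine le_of_tendsto hslope ?_
  filter_upwards [Ico_mem_nhdsLT has] with t ht
  rw [slope_def_field]
  exact div_nonpos_of_nonneg_of_nonpos (sub_nonneg.mpr (hmin t ht)) (by linarith [ht.2])

lemma hasDerivAt_dotProduct_mulVec {D : ℝ → Matrix ι ι ℝ} {D' : Matrix ι ι ℝ} {s : ℝ}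
    (hD : ∀ i j, HasDerivAt (fun t => D t i j) (D' i j) s) (x : ι → ℝ) :
    HasDerivAt (fun t => x ⬝ᵥ D t *ᵥ x) (x ⬝ᵥ D' *ᵥ x) s := by
  simp only [dotProduct, mulVec]
  exact .fun_sum fun i _ => (HasDerivAt.fun_sum fun j _ => (hD i j).mul_const _).const_mul _

lemma isCompact_setOf_exists_nonpos {X Y : Type*} [TopologicalSpace X] [T2Space X]
    [TopologicalSpace Y] [T2Space Y] {s : Set X} {K : Set Y} (hs : IsCompact s) (hK : IsCompact K)
    {f : X → Y → ℝ} (hf : ContinuousOn (Function.uncurry f) (s ×ˢ K)) :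
    IsCompact {x ∈ s | ∃ y ∈ K, f x y ≤ 0} := by
  have hcl : IsClosed (s ×ˢ K ∩ Function.uncurry f ⁻¹' Iic 0) :=
    hf.preimage_isClosed_of_isClosed (hs.prod hK).isClosed isClosed_Iic
  convert ((hs.prod hK).of_isClosed_subset hcl inter_subset_left).image continuous_fst using 1
  ext x
  constructor
  · rintro ⟨hx, y, hy, hxy⟩
    exact ⟨(x, y), ⟨⟨hx, hy⟩, hxy⟩, rfl⟩
  · rintro ⟨⟨x, y⟩, ⟨⟨hx, hy⟩, hxy⟩, rfl⟩
    exact ⟨hx, y, hy, hxy⟩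

lemma Matrix.IsHermitian.mulVec_eq_smul_of_isMinOn {M : Matrix ι ι ℝ}
    (hM : M.IsHermitian) {x : ι → ℝ}
    (hmin : IsMinOn (fun y => y ⬝ᵥ M *ᵥ y) {y | y ⬝ᵥ y = 1} x) (hx : x ⬝ᵥ x = 1) :
    M *ᵥ x = (x ⬝ᵥ M *ᵥ x) • x := by
  classical
  set μ := x ⬝ᵥ M *ᵥ x
  have hquad : ∀ y, y ⬝ᵥ (M - μ • 1) *ᵥ y = y ⬝ᵥ M *ᵥ y - μ * (y ⬝ᵥ y) := fun y => by
    rw [sub_mulVec, smul_mulVec, one_mulVec, dotProduct_sub, dotProduct_smul, smul_eq_mul]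
  have hpsd : (M - μ • 1).PosSemidef := by
    refine .of_dotProduct_mulVec_nonneg (hM.sub (isHermitian_one.smul (.all μ))) fun y => ?_
    refine dotProduct_mulVec_nonneg_of_forall_dotProduct_self_eq_one (fun y hy => ?_) (star y)
    rw [hquad, hy, mul_one, sub_nonneg]
    exact hmin hy
  have hzero := (hpsd.dotProduct_mulVec_zero_iff x).mp (by simp [hquad, hx, μ])
  rwa [sub_mulVec, smul_mulVec, one_mulVec, sub_eq_zero] at hzero

lemma exists_first_touch {Y : Type*} [TopologicalSpace Y] [T2Space Y] {K : Set Y} {T : ℝ}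
    (hK : IsCompact K) {f : ℝ → Y → ℝ} (hf : ContinuousOn (Function.uncurry f) (Icc 0 T ×ˢ K))
    (h0 : ∀ y ∈ K, 0 < f 0 y) (hbad : ∃ t ∈ Icc 0 T, ∃ y ∈ K, f t y ≤ 0) :
    ∃ s ∈ Ioc 0 T, ∃ x ∈ K, f s x = 0 ∧ (∀ y ∈ K, 0 ≤ f s y) ∧
      ∀ t ∈ Ico 0 s, ∀ y ∈ K, 0 < f t y := by
  obtain ⟨s, ⟨⟨hs0, hsT⟩, x, hx, hfx⟩, hsmin⟩ :=
    (isCompact_setOf_exists_nonpos isCompact_Icc hK hf).exists_isLeast hbad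
  have hbefore : ∀ t ∈ Ico 0 s, ∀ y ∈ K, 0 < f t y := fun t ht y hy => by
    by_contra! hle
    exact (hsmin ⟨⟨ht.1, ht.2.le.trans hsT⟩, y, hy, hle⟩).not_gt ht.2
  have hspos : 0 < s := hs0.lt_of_ne fun hs => by subst hs; exact (h0 x hx).not_ge hfx
  have hnonneg : ∀ y ∈ K, 0 ≤ f s y := fun y hy => by
    have hcont : ContinuousWithinAt (fun t => f t y) (Ico 0 s) s :=
      ((hf.comp (continuousOn_id.prodMk continuousOn_const) fun t ht => ⟨ht, hy⟩) s
        ⟨hs0, hsT⟩).mono fun t ht => ⟨ht.1, ht.2.le.trans hsT⟩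
    refine ContinuousWithinAt.closure_le (f := fun _ => (0 : ℝ)) (g := fun t => f t y) ?_
      continuousWithinAt_const hcont fun t ht => (hbefore t ht y hy).le
    rw [closure_Ico hspos.ne]
    exact right_mem_Icc.mpr hs0
  exact ⟨s, ⟨hspos, hsT⟩, x, hx, le_antisymm hfx (hnonneg x hx), hnonneg, hbefore⟩

section PosSemidefInvariance

variable {D D' : ℝ → Matrix ι ι ℝ} {T C : ℝ}

lemma continuousOn_dotProduct_mulVec_add_exp (hD : ContinuousOn D (Icc 0 T)) (ε c : ℝ) :
    ContinuousOn (fun p : ℝ × (ι → ℝ) => p.2 ⬝ᵥ D p.1 *ᵥ p.2 + ε * Real.exp (c * p.1))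
      (Icc 0 T ×ˢ univ) := by
  have hquad : Continuous fun q : Matrix ι ι ℝ × (ι → ℝ) => q.2 ⬝ᵥ q.1 *ᵥ q.2 :=
    continuous_snd.dotProduct (continuous_fst.matrix_mulVec continuous_snd)
  refine (hquad.comp_continuousOn ((hD.comp continuousOn_fst fun p hp => hp.1).prodMk
    continuousOn_snd)).add (Continuous.continuousOn ?_)
  fun_prop

lemma dotProduct_mulVec_add_exp_pos
    (hD : ContinuousOn D (Icc 0 T)) (hherm : ∀ t ∈ Icc 0 T, (D t).IsHermitian)
    (hderiv : ∀ t ∈ Icc 0 T, ∀ i j, HasDerivAt (fun s => D s i j) (D' t i j) t)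
    (h0 : (D 0).PosSemidef)
    (hinward : ∀ t ∈ Icc 0 T, ∀ μ > 0, ∀ x, x ⬝ᵥ x = 1 → D t *ᵥ x = -μ • x →
      -(C * μ) ≤ x ⬝ᵥ D' t *ᵥ x)
    {ε : ℝ} (hε : 0 < ε) :
    ∀ t ∈ Icc 0 T, ∀ x : ι → ℝ, x ⬝ᵥ x = 1 →
      0 < x ⬝ᵥ D t *ᵥ x + ε * Real.exp ((C + 1) * t) := by
  set f : ℝ → (ι → ℝ) → ℝ := fun t x => x ⬝ᵥ D t *ᵥ x + ε * Real.exp ((C + 1) * t)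
  have hf : ContinuousOn (Function.uncurry f) (Icc 0 T ×ˢ {x | x ⬝ᵥ x = 1}) :=
    (continuousOn_dotProduct_mulVec_add_exp hD ε (C + 1)).mono
      (prod_mono subset_rfl (subset_univ _))
  have hf0 : ∀ x ∈ {x : ι → ℝ | x ⬝ᵥ x = 1}, 0 < f 0 x := fun x _ => by
    have := h0.dotProduct_mulVec_nonneg x
    simp only [star_trivial] at this
    simp only [f, mul_zero, Real.exp_zero, mul_one]
    linarith
  by_contra! hbad
  obtain ⟨s, ⟨hspos, hsT⟩, x, hx, hfx, hnonneg, hbefore⟩ :=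
    exists_first_touch isCompact_setOf_dotProduct_self_eq_one hf hf0 hbad
  have hsmem : s ∈ Icc 0 T := ⟨hspos.le, hsT⟩
  set μ := ε * Real.exp ((C + 1) * s)
  have heig : D s *ᵥ x = -μ • x := by
    have hmin : IsMinOn (fun y => y ⬝ᵥ D s *ᵥ y) {y | y ⬝ᵥ y = 1} x :=
      isMinOn_iff.mpr fun y hy => by linarith [hnonneg y hy]
    rw [(hherm s hsmem).mulVec_eq_smul_of_isMinOn hmin hx, show x ⬝ᵥ D s *ᵥ x = -μ by linarith]
  have hg : HasDerivAt (fun t => f t x) (x ⬝ᵥ D' s *ᵥ x + μ * (C + 1)) s := by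
    refine (hasDerivAt_dotProduct_mulVec (hderiv s hsmem) x).add ?_
    simpa [μ, mul_assoc] using (((hasDerivAt_id s).const_mul (C + 1)).exp).const_mul ε
  have hslope := hg.nonpos_of_forall_Ico_le hspos fun t ht => hfx ▸ (hbefore t ht x hx).le
  have hμ : 0 < μ := by positivity
  nlinarith [hinward s hsmem μ hμ x hx heig]

theorem posSemidef_of_hasDerivAt_of_inward
    (hherm : ∀ t ∈ Icc 0 T, (D t).IsHermitian)
    (hderiv : ∀ t ∈ Icc 0 T, ∀ i j, HasDerivAt (fun s => D s i j) (D' t i j) t)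
    (h0 : (D 0).PosSemidef)
    (hinward : ∀ t ∈ Icc 0 T, ∀ μ > 0, ∀ x, x ⬝ᵥ x = 1 → D t *ᵥ x = -μ • x →
      -(C * μ) ≤ x ⬝ᵥ D' t *ᵥ x) :
    ∀ t ∈ Icc 0 T, (D t).PosSemidef := by
  intro t ht
  refine .of_dotProduct_mulVec_nonneg (hherm t ht) fun x => ?_
  refine dotProduct_mulVec_nonneg_of_forall_dotProduct_self_eq_one (fun x hx => ?_) (star x)
  refine le_iff_forall_pos_lt_add.mpr fun ε hε => ?_
  have hexp := Real.exp_pos ((C + 1) * t)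
  simpa [div_mul_cancel₀ _ hexp.ne'] using dotProduct_mulVec_add_exp_pos
    (continuousOn_of_forall_hasDerivAt_apply hderiv) hherm hderiv h0 hinward (div_pos hε hexp)
    t ht x hx

end PosSemidefInvariance

def riccatiField (A G Q : Matrix ι ι ℝ) (η : ℝ) (Ω : Matrix ι ι ℝ) : Matrix ι ι ℝ :=
  A * Ω + Ω * Aᵀ + Q - η • (Ω * G * Ω)

lemma dotProduct_riccatiField_sub_ge {A G Q Ω₁ Ω₂ : Matrix ι ι ℝ} {η₁ η₂ μ : ℝ}
    (hG : G.PosSemidef) (hΩ₁ : Ω₁.IsSymm) (hΩ₂ : Ω₂.IsSymm) (hη₂ : 0 ≤ η₂) (hη : η₂ ≤ η₁)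
    {x : ι → ℝ} (hx : (Ω₂ - Ω₁) *ᵥ x = -μ • x) :
    -(2 * μ * (x ⬝ᵥ A *ᵥ x - η₂ * (x ⬝ᵥ G *ᵥ (Ω₂ *ᵥ x)))) ≤
      x ⬝ᵥ (riccatiField A G Q η₂ Ω₂ - riccatiField A G Q η₁ Ω₁) *ᵥ x := by
  have hGsymm : G.IsSymm := isHermitian_iff_isSymm.mp hG.1
  have hGnonneg : ∀ y, 0 ≤ y ⬝ᵥ G *ᵥ y := by simpa using hG.dotProduct_mulVec_nonneg
  set w := Ω₂ *ᵥ x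
  have hu : Ω₁ *ᵥ x = w + μ • x := by
    rw [sub_mulVec] at hx
    rw [← sub_eq_iff_eq_add', ← neg_sub, hx, neg_smul, neg_neg]
  have hquad : ∀ Ω : Matrix ι ι ℝ, Ω.IsSymm → x ⬝ᵥ (Ω * G * Ω) *ᵥ x = (Ω *ᵥ x) ⬝ᵥ G *ᵥ (Ω *ᵥ x) :=
    fun Ω hΩ => by rw [← mulVec_mulVec, ← mulVec_mulVec, hΩ.dotProduct_mulVec_comm, dotProduct_comm]
  have hcross : ∀ Ω : Matrix ι ι ℝ, Ω.IsSymm →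
      x ⬝ᵥ (A * Ω + Ω * Aᵀ) *ᵥ x = 2 * (x ⬝ᵥ A *ᵥ (Ω *ᵥ x)) := fun Ω hΩ => by
    rw [add_mulVec, dotProduct_add, ← mulVec_mulVec, ← mulVec_mulVec, hΩ.dotProduct_mulVec_comm,
      mulVec_transpose, ← dotProduct_mulVec]
    ring
  have hidentity : x ⬝ᵥ (riccatiField A G Q η₂ Ω₂ - riccatiField A G Q η₁ Ω₁) *ᵥ x =
      -(2 * μ * (x ⬝ᵥ A *ᵥ x - η₂ * (x ⬝ᵥ G *ᵥ w))) + (η₁ - η₂) * ((Ω₁ *ᵥ x) ⬝ᵥ G *ᵥ (Ω₁ *ᵥ x))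
        + η₂ * μ ^ 2 * (x ⬝ᵥ G *ᵥ x) := by
    simp only [riccatiField, sub_mulVec, add_mulVec _ Q, smul_mulVec, dotProduct_sub,
      dotProduct_add, dotProduct_smul, smul_eq_mul, hcross _ hΩ₁, hcross _ hΩ₂, hquad _ hΩ₁,
      hquad _ hΩ₂, hu, mulVec_add, mulVec_smul, add_dotProduct, smul_dotProduct, hGsymm.dotProduct_mulVec_comm x w]
    ring
  rw [hidentity]
  have := mul_nonneg (sub_nonneg.mpr hη) (hGnonneg (Ω₁ *ᵥ x))
  have := mul_nonneg (mul_nonneg hη₂ (sq_nonneg μ)) (hGnonneg x)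
  linarith

theorem riccati_monotonicity_in_gain_general {n : ℕ} {T : ℝ}
    (A G Q : Matrix (Fin n) (Fin n) ℝ)
    (hG : G.PosSemidef)
    (η₁ η₂ : ℝ → ℝ) (hη₂ : Continuous η₂)
    (hη₂nonneg : ∀ t, 0 ≤ η₂ t) (hη : ∀ t, η₂ t ≤ η₁ t)
    (Ω₁ Ω₂ : ℝ → Matrix (Fin n) (Fin n) ℝ)
    (hode₁ : ∀ t ∈ Icc 0 T, ∀ i j, HasDerivAt (fun t' => Ω₁ t' i j)
      ((A * Ω₁ t + Ω₁ t * Aᵀ + Q - η₁ t • (Ω₁ t * G * Ω₁ t)) i j) t)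
    (hode₂ : ∀ t ∈ Icc 0 T, ∀ i j, HasDerivAt (fun t' => Ω₂ t' i j)
      ((A * Ω₂ t + Ω₂ t * Aᵀ + Q - η₂ t • (Ω₂ t * G * Ω₂ t)) i j) t)
    (hpsd₁ : ∀ t ∈ Icc 0 T, (Ω₁ t).PosSemidef)
    (hpsd₂ : ∀ t ∈ Icc 0 T, (Ω₂ t).PosSemidef)
    (h0 : (Ω₂ 0 - Ω₁ 0).PosSemidef) :
    ∀ t ∈ Icc 0 T, (Ω₂ t - Ω₁ t).PosSemidef := by
  have hΩ₂ : ContinuousOn Ω₂ (Icc 0 T) := continuousOn_of_forall_hasDerivAt_apply hode₂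
  have hgain : Continuous fun q : ℝ × Matrix (Fin n) (Fin n) ℝ × (Fin n → ℝ) =>
      q.2.2 ⬝ᵥ A *ᵥ q.2.2 - q.1 * (q.2.2 ⬝ᵥ G *ᵥ (q.2.1 *ᵥ q.2.2)) := by fun_prop
  obtain ⟨C, hC⟩ := (isCompact_Icc.prod isCompact_setOf_dotProduct_self_eq_one).bddAbove_image
    (hgain.comp_continuousOn ((hη₂.comp_continuousOn continuousOn_fst).prodMk
      ((hΩ₂.comp continuousOn_fst fun p hp => hp.1).prodMk continuousOn_snd)))
  refine posSemidef_of_hasDerivAt_of_inward (C := 2 * C)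
    (D' := fun t => riccatiField A G Q (η₂ t) (Ω₂ t) - riccatiField A G Q (η₁ t) (Ω₁ t))
    (fun t ht => (hpsd₂ t ht).1.sub (hpsd₁ t ht).1)
    (fun t ht i j => (hode₂ t ht i j).sub (hode₁ t ht i j)) h0 ?_
  intro t ht μ hμ x hx hxeig
  have hlower := dotProduct_riccatiField_sub_ge (A := A) (Q := Q) hG
    (isHermitian_iff_isSymm.mp (hpsd₁ t ht).1) (isHermitian_iff_isSymm.mp (hpsd₂ t ht).1)
    (hη₂nonneg t) (hη t) hxeig
  have hbound : x ⬝ᵥ A *ᵥ x - η₂ t * (x ⬝ᵥ G *ᵥ (Ω₂ t *ᵥ x)) ≤ C := hC ⟨(t, x), ⟨ht, hx⟩, rfl⟩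
  nlinarith

theorem riccati_monotonicity_in_gain {n : ℕ} {T : ℝ} (hT : 0 ≤ T)
    (A G Q : Matrix (Fin n) (Fin n) ℝ)
    (hG : G.PosSemidef) (hQ : Q.PosSemidef)
    (η₁ η₂ : ℝ → ℝ) (hη₁ : Continuous η₁) (hη₂ : Continuous η₂)
    (hη₂nonneg : ∀ t, 0 ≤ η₂ t) (hη : ∀ t, η₂ t ≤ η₁ t)
    (Ω₁ Ω₂ : ℝ → Matrix (Fin n) (Fin n) ℝ)
    (hC1₁ : ∀ i j, ContinuousOn (fun t => Ω₁ t i j) (Icc 0 T))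
    (hC1₂ : ∀ i j, ContinuousOn (fun t => Ω₂ t i j) (Icc 0 T))
    (hode₁ : ∀ t ∈ Icc 0 T, ∀ i j, HasDerivAt (fun t' => Ω₁ t' i j)
      ((A * Ω₁ t + Ω₁ t * Aᵀ + Q - η₁ t • (Ω₁ t * G * Ω₁ t)) i j) t)
    (hode₂ : ∀ t ∈ Icc 0 T, ∀ i j, HasDerivAt (fun t' => Ω₂ t' i j)
      ((A * Ω₂ t + Ω₂ t * Aᵀ + Q - η₂ t • (Ω₂ t * G * Ω₂ t)) i j) t)
    (hpsd₁ : ∀ t ∈ Icc 0 T, (Ω₁ t).PosSemidef)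
    (hpsd₂ : ∀ t ∈ Icc 0 T, (Ω₂ t).PosSemidef)
    (hbdd₁ : ∃ B, ∀ t ∈ Icc 0 T, ∀ i j, |Ω₁ t i j| ≤ B)
    (hbdd₂ : ∃ B, ∀ t ∈ Icc 0 T, ∀ i j, |Ω₂ t i j| ≤ B)
    (h0 : (Ω₂ 0 - Ω₁ 0).PosSemidef) :
    ∀ t ∈ Icc 0 T, (Ω₂ t - Ω₁ t).PosSemidef :=
  riccati_monotonicity_in_gain_general A G Q hG η₁ η₂ hη₂ hη₂nonneg hη Ω₁ Ω₂ hode₁ hode₂ hpsd₁ hpsd₂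
    h0
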